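/- arXiv:2206.12726 — 3 statements merged into one kernel-verified Lean document; each statement's English description precedes it below -/
import Mathlib

section
/- For each k ≥ 0, the continuous function fₖ = Σ_{n=k}^∞ (n!/k!) βₙ (a valid Mahler series since n!/k! → 0 p-adically) satisfies S(fₖ) = βₖ. -/
open Filter Finset

/-- The canonical embedding `ℤ_[p] → K` (where `K` plays the role of `ℂ_p`,
a complete nontrivially normed field extension of `ℚ_[p]`). -/
noncomputable def pc (p : ℕ) [Fact p.Prime] (K : Type*) [NontriviallyNormedField K]
    [NormedAlgebra ℚ_[p] K] (x : ℤ_[p]) : K :=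
  algebraMap ℚ_[p] K x

/-- The operator `S` : `S(f)(x) = f(x) - x·f(x-1)`. -/
noncomputable def Sop (p : ℕ) [Fact p.Prime] (K : Type*) [NontriviallyNormedField K]
    [NormedAlgebra ℚ_[p] K] (f : ℤ_[p] → K) : ℤ_[p] → K :=
  fun x => f x - pc p K x * f (x - 1)

/-- The Mahler basis function `βₙ(x) = C(x,n) = x(x-1)⋯(x-n+1)/n!`, valued in `K`. -/
noncomputable def bK (p : ℕ) [Fact p.Prime] (K : Type*) [NontriviallyNormedField K]
    [NormedAlgebra ℚ_[p] K] (n : ℕ) (x : ℤ_[p]) : K :=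
  (∏ i ∈ Finset.range n, (pc p K x - (i : K))) / (n.factorial : K)

/- ### Auxiliary lemmas -/

lemma aux_pow_div_dvd_factorial (p : ℕ) : ∀ n : ℕ, p ^ (n / p) ∣ n.factorial := by
  intro n
  induction n with
  | zero => simp
  | succ n ih =>
    rw [Nat.succ_div]
    by_cases h : p ∣ (n + 1)
    · rw [if_pos h, pow_succ, Nat.factorial_succ, Nat.mul_comm (n+1) n.factorial]
      exact mul_dvd_mul ih h
    · rw [if_neg h, add_zero]
      exact ih.trans (Nat.factorial_dvd_factorial (Nat.le_succ n))

lemma aux_norm_factorial_tendsto (p : ℕ) [hp : Fact p.Prime] :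
    Tendsto (fun n : ℕ => ‖((n.factorial : ℕ) : ℚ_[p])‖) atTop (nhds 0) := by
  have hp1 : (1 : ℝ) < p := by exact_mod_cast hp.out.one_lt
  have h0 : (0 : ℝ) ≤ (p : ℝ)⁻¹ := by positivity
  have h1 : (p : ℝ)⁻¹ < 1 := by
    rw [inv_lt_one_iff₀]; right; exact hp1
  have hdiv : Tendsto (fun n : ℕ => n / p) atTop atTop := by
    apply Filter.tendsto_atTop_atTop.mpr
    intro b
    exact ⟨b * p, fun n hn => (Nat.le_div_iff_mul_le hp.out.pos).mpr hn⟩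
  have hgeo : Tendsto (fun n : ℕ => ((p : ℝ)⁻¹) ^ (n / p)) atTop (nhds 0) :=
    (tendsto_pow_atTop_nhds_zero_of_lt_one h0 h1).comp hdiv
  refine squeeze_zero (fun n => norm_nonneg _) (fun n => ?_) hgeo
  obtain ⟨t, ht⟩ := aux_pow_div_dvd_factorial p n
  rw [ht]
  push_cast
  rw [norm_mul, norm_pow, Padic.norm_p]
  calc ((p:ℝ)⁻¹) ^ (n / p) * ‖((t : ℤ) : ℚ_[p])‖ ≤ ((p:ℝ)⁻¹) ^ (n / p) * 1 := by
        gcongr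
        exact Padic.norm_int_le_one _
    _ = ((p:ℝ)⁻¹) ^ (n / p) := mul_one _

lemma aux_bK_eq (p : ℕ) [Fact p.Prime] (K : Type*) [NontriviallyNormedField K]
    [NormedAlgebra ℚ_[p] K] (n : ℕ) (x : ℤ_[p]) :
    bK p K n x = algebraMap ℚ_[p] K
      ((((descPochhammer ℤ_[p] n).eval x : ℤ_[p]) : ℚ_[p]) / ((n.factorial : ℕ) : ℚ_[p])) := by
  have hprod : (descPochhammer ℤ_[p] n).eval x = ∏ i ∈ Finset.range n, (x - (i : ℤ_[p])) := by
    induction n with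
    | zero => simp
    | succ n ih => rw [Finset.prod_range_succ, ← ih, descPochhammer_succ_eval]
  have h1 : ∀ m : ℕ, ((∏ i ∈ Finset.range m, (x - (i : ℤ_[p])) : ℤ_[p]) : ℚ_[p])
      = ∏ i ∈ Finset.range m, ((x : ℚ_[p]) - (i : ℚ_[p])) := by
    intro m
    induction m with
    | zero => simp
    | succ m ih =>
      rw [Finset.prod_range_succ, Finset.prod_range_succ, PadicInt.coe_mul, ih,
        PadicInt.coe_sub, PadicInt.coe_natCast]
  rw [hprod, map_div₀, map_natCast, h1 n, map_prod]
  unfold bK pc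
  congr 1
  refine Finset.prod_congr rfl fun i _ => ?_
  rw [map_sub, map_natCast]

lemma aux_norm_bK_le (p : ℕ) [Fact p.Prime] (K : Type*) [NontriviallyNormedField K]
    [NormedAlgebra ℚ_[p] K] (n : ℕ) (x : ℤ_[p]) : ‖bK p K n x‖ ≤ 1 := by
  rw [aux_bK_eq, norm_algebraMap', norm_div]
  have hfac : (0 : ℝ) < ‖((n.factorial : ℕ) : ℚ_[p])‖ := by
    rw [norm_pos_iff]
    exact_mod_cast n.factorial_ne_zero
  rw [div_le_one hfac, PadicInt.padic_norm_e_of_padicInt]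
  rw [descPochhammer_eval_eq_ascPochhammer (R := ℤ_[p]) x n]
  refine (PadicInt.norm_ascPochhammer_le n (x - (n : ℤ_[p]) + 1)).trans ?_
  have : ‖((n.factorial : ℕ) : ℤ_[p])‖ = ‖((n.factorial : ℕ) : ℚ_[p])‖ := by
    rw [← PadicInt.padic_norm_e_of_padicInt, PadicInt.coe_natCast]
  rw [this]

lemma aux_bK_succ (p : ℕ) [Fact p.Prime] (K : Type*) [NontriviallyNormedField K]
    [NormedAlgebra ℚ_[p] K] (n : ℕ) (x : ℤ_[p]) :
    pc p K x * bK p K n (x - 1) = (((n + 1 : ℕ)) : K) * bK p K (n + 1) x := by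
  haveI : CharZero K := charZero_of_injective_algebraMap (algebraMap ℚ_[p] K).injective
  have hpc : pc p K (x - 1) = pc p K x - 1 := by
    unfold pc
    rw [show ((x - 1 : ℤ_[p]) : ℚ_[p]) = (x : ℚ_[p]) - 1 by push_cast; ring, map_sub, map_one]
  have hprod : ∏ i ∈ Finset.range (n+1), (pc p K x - (i : K))
      = (∏ i ∈ Finset.range n, (pc p K (x-1) - (i : K))) * pc p K x := by
    rw [Finset.prod_range_succ']
    congr 1
    · refine Finset.prod_congr rfl fun i _ => ?_
      rw [hpc]
      push_cast
      ring
    · simp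
  have hn : ((n.factorial : ℕ) : K) ≠ 0 := Nat.cast_ne_zero.mpr n.factorial_ne_zero
  have hn1 : ((n : K) + 1) ≠ 0 := Nat.cast_add_one_ne_zero n
  unfold bK
  rw [hprod, Nat.factorial_succ]
  push_cast
  field_simp

lemma aux_coeff_succ (k m : ℕ) (K : Type*) [Field K] [CharZero K] :
    (((k + m + 1).factorial / k.factorial : ℕ) : K)
      = ((k + m + 1 : ℕ) : K) * (((k + m).factorial / k.factorial : ℕ) : K) := by
  have hd : k.factorial ∣ (k + m).factorial :=
    Nat.factorial_dvd_factorial (Nat.le_add_right k m)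
  have : (k + m + 1).factorial / k.factorial = (k + m + 1) * ((k + m).factorial / k.factorial) := by
    rw [Nat.factorial_succ, Nat.mul_div_assoc _ hd]
  rw [this]
  push_cast
  ring

set_option maxHeartbeats 1000000 in
/-- For each `k ≥ 0`, the continuous function
`fₖ = Σ_{n=k}^∞ (n!/k!) βₙ` satisfies `S fₖ = βₖ`. -/
theorem stmt_3 (p : ℕ) [Fact p.Prime] (K : Type*) [NontriviallyNormedField K]
    [NormedAlgebra ℚ_[p] K] [CompleteSpace K] (k : ℕ) :
    Sop p K (fun y => ∑' n : ℕ,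
        (if k ≤ n then ((n.factorial / k.factorial : ℕ) : K) else 0) * bK p K n y)
      = bK p K k := by
  haveI : CharZero K := charZero_of_injective_algebraMap (algebraMap ℚ_[p] K).injective
  haveI : IsUltrametricDist K := by
    refine IsUltrametricDist.isUltrametricDist_of_forall_norm_natCast_le_one fun n => ?_
    rw [show ((n : K)) = algebraMap ℚ_[p] K (n : ℚ_[p]) by rw [map_natCast], norm_algebraMap']
    exact_mod_cast Padic.norm_int_le_one (n : ℤ)
  set c : ℕ → K := fun n => if k ≤ n then ((n.factorial / k.factorial : ℕ) : K) else 0 with hc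
  have hnormc : ∀ n, ‖c n‖ ≤ ‖((n.factorial : ℕ) : ℚ_[p])‖ / ‖((k.factorial : ℕ) : ℚ_[p])‖ := by
    intro n
    by_cases h : k ≤ n
    · have hd : k.factorial ∣ n.factorial := Nat.factorial_dvd_factorial h
      have hcn : c n = algebraMap ℚ_[p] K (((n.factorial / k.factorial : ℕ) : ℚ_[p])) := by
        rw [hc]; simp only [if_pos h, map_natCast]
      rw [hcn, norm_algebraMap',
        Nat.cast_div hd (by exact_mod_cast k.factorial_ne_zero), norm_div]
    · rw [hc]; simp only [if_neg h, norm_zero]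
      positivity
  have hsum : ∀ z : ℤ_[p], Summable (fun n => c n * bK p K n z) := by
    intro z
    apply NonarchimedeanAddGroup.summable_of_tendsto_cofinite_zero
    rw [Nat.cofinite_eq_atTop]
    refine squeeze_zero_norm (fun n => ?_)
      ((?_ : Tendsto (fun n : ℕ => ‖((n.factorial : ℕ) : ℚ_[p])‖
        / ‖((k.factorial : ℕ) : ℚ_[p])‖) atTop (nhds 0)))
    · rw [norm_mul]
      calc ‖c n‖ * ‖bK p K n z‖ ≤ ‖c n‖ * 1 := by
            gcongr; exact aux_norm_bK_le p K n z
        _ = ‖c n‖ := mul_one _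
        _ ≤ _ := hnormc n
    · simpa only [div_eq_mul_inv, zero_mul] using
        (aux_norm_factorial_tendsto p).mul_const (‖((k.factorial : ℕ) : ℚ_[p])‖⁻¹)
  funext x
  have hS1 := hsum x
  have hS2 : Summable (fun n => pc p K x * (c n * bK p K n (x - 1))) :=
    (hsum (x - 1)).mul_left _
  show (∑' n, c n * bK p K n x) - pc p K x * ∑' n, c n * bK p K n (x - 1) = bK p K k x
  rw [← tsum_mul_left, ← Summable.tsum_sub hS1 hS2]
  set F : ℕ → K := fun n => c n * bK p K n x - pc p K x * (c n * bK p K n (x - 1)) with hF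
  have hFzero : ∀ n, n < k → F n = 0 := by
    intro n hn
    rw [hF]
    simp only [hc, if_neg (not_le.mpr hn), zero_mul, mul_zero, sub_zero]
  -- shift the sum by k
  have hshift : ∑' n, F n = ∑' m, F (k + m) := by
    refine (Function.Injective.tsum_eq (f := F) (fun a b h => by omega) ?_).symm
    intro n hn
    rcases le_or_gt k n with h | h
    · exact ⟨n - k, by omega⟩
    · exact absurd (hFzero n h) (Function.mem_support.mp hn)
  -- the telescoping sequence
  set D : ℕ → K := fun m => (((k + m).factorial / k.factorial : ℕ) : K) * bK p K (k + m) x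
    with hD
  have hDsum : Summable D := by
    have h1 : Summable (fun m => c (m + k) * bK p K (m + k) x) :=
      (summable_nat_add_iff k).mpr hS1
    refine h1.congr fun m => ?_
    simp only [hD, hc, add_comm m k, if_pos (Nat.le_add_right k m)]
  have hFtel : ∀ m, F (k + m) = D m - D (m + 1) := by
    intro m
    rw [hF, hD]
    dsimp only
    have hck : c (k + m) = (((k + m).factorial / k.factorial : ℕ) : K) := by
      rw [hc]; simp only [if_pos (Nat.le_add_right k m)]
    rw [hck]
    have hsucc : pc p K x * bK p K (k + m) (x - 1)
        = (((k + m + 1 : ℕ)) : K) * bK p K (k + m + 1) x := aux_bK_succ p K (k + m) x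
    have hmul : pc p K x * ((((k + m).factorial / k.factorial : ℕ) : K) * bK p K (k + m) (x - 1))
        = (((k + m).factorial / k.factorial : ℕ) : K)
          * ((((k + m + 1 : ℕ)) : K) * bK p K (k + m + 1) x) := by
      rw [← hsucc]; ring
    rw [hmul, show k + (m + 1) = k + m + 1 by omega, aux_coeff_succ k m K]
    ring
  -- now compute the telescoping sum
  have hDshift : Summable (fun m => D (m + 1)) := (summable_nat_add_iff 1).mpr hDsum
  calc ∑' n, F n = ∑' m, (D m - D (m + 1)) := by
        rw [hshift]; exact tsum_congr hFtel
    _ = (∑' m, D m) - ∑' m, D (m + 1) := Summable.tsum_sub hDsum hDshift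
    _ = D 0 := by rw [Summable.tsum_eq_zero_add hDsum]; ring
    _ = bK p K k x := by
        rw [hD]
        simp only [add_zero, Nat.div_self k.factorial_pos, Nat.cast_one, one_mul]
end

section
/- For any continuous g : ℤₚ → ℂₚ and all x ∈ ℤₚ, S⁻¹(g)(x) = Σ_{n=0}^∞ (x)ₙ g(x−n), where (x)ₙ = x(x−1)⋯(x−n+1) is the falling factorial; the series converges uniformly since |(x)ₙ| ≤ |n!|. -/
/-!
Unwinding `f x = g x + x * f (x - 1)` `N` times gives
`f x = ∑_{n < N} (x)ₙ g (x - n) + (x)_N f (x - N)`. In `ℤ_[p]` the falling factorial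
`(x)_N = N! * C(x, N)` has norm at most `‖N!‖ ≤ p ^ (-⌊N / p⌋)`, which tends to `0`, while `f` and
`g` are bounded on the compact `ℤ_[p]`. So the remainder vanishes, and the terms of the series tend
to `0`, which suffices for summability since the norm of `K` is ultrametric.
-/

open Filter Finset

open scoped Nat Topology

variable {p : ℕ} [Fact p.Prime]

theorem Nat.pow_div_dvd_factorial (n : ℕ) : p ^ (n / p) ∣ n ! := by
  rw [padicValNat_dvd_iff_le (factorial_ne_zero n), ← padicValNat_mul_div_factorial,
    padicValNat_factorial_mul]
  exact Nat.le_add_left _ _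

namespace PadicInt

theorem tendsto_factorial_atTop_zero : Tendsto (fun n : ℕ => (n ! : ℤ_[p])) atTop (𝓝 0) := by
  have hpow : Tendsto (fun k : ℕ => (p : ℤ_[p]) ^ k) atTop (𝓝 0) :=
    tendsto_pow_atTop_nhds_zero_of_norm_lt_one Padic.norm_p_lt_one
  have hdiv := Nat.tendsto_div_const_atTop (Fact.out : p.Prime).ne_zero
  refine squeeze_zero_norm (fun n => ?_) (tendsto_norm_zero.comp (hpow.comp hdiv))
  obtain ⟨m, hm⟩ := Nat.pow_div_dvd_factorial (p := p) n
  rw [hm, Nat.cast_mul, norm_mul, Nat.cast_pow]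
  exact mul_le_of_le_one_right (norm_nonneg _) (norm_le_one _)

theorem norm_descPochhammer_eval_le (n : ℕ) (x : ℤ_[p]) :
    ‖(descPochhammer ℤ_[p] n).eval x‖ ≤ ‖(n ! : ℤ_[p])‖ := by
  rw [descPochhammer_eval_eq_ascPochhammer]
  exact norm_ascPochhammer_le n _

end PadicInt

section

variable {K : Type*} [NontriviallyNormedField K] [NormedAlgebra ℚ_[p] K]

theorem pc_eq_ringHom : pc p K = (algebraMap ℚ_[p] K).comp PadicInt.Coe.ringHom := rfl

theorem norm_pc (x : ℤ_[p]) : ‖pc p K x‖ = ‖x‖ := by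
  rw [pc, norm_algebraMap', PadicInt.padic_norm_e_of_padicInt]

theorem pc_sub_natCast (x : ℤ_[p]) (n : ℕ) : pc p K (x - n) = pc p K x - n := by
  rw [pc_eq_ringHom, map_sub, map_natCast]

theorem prod_range_pc_sub_natCast (x : ℤ_[p]) (n : ℕ) :
    ∏ i ∈ range n, (pc p K x - i) = pc p K ((descPochhammer ℤ_[p] n).eval x) := by
  induction n with
  | zero => simp [pc_eq_ringHom]
  | succ n ih =>
    rw [prod_range_succ, ih, descPochhammer_succ_eval, ← pc_sub_natCast, pc_eq_ringHom, map_mul]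

theorem sum_range_prod_mul_Sop (f : ℤ_[p] → K) (x : ℤ_[p]) (N : ℕ) :
    ∑ n ∈ range N, (∏ i ∈ range n, (pc p K x - i)) * Sop p K f (x - n) =
      f x - (∏ i ∈ range N, (pc p K x - i)) * f (x - N) := by
  induction N with
  | zero => simp
  | succ N ih =>
    rw [sum_range_succ, ih, prod_range_succ, Sop, pc_sub_natCast, Nat.cast_succ, ← sub_sub]
    ring

theorem tendsto_prod_range_pc_sub_mul {h : ℤ_[p] → K} (hh : Continuous h) (x : ℤ_[p]) :
    Tendsto (fun n : ℕ => (∏ i ∈ range n, (pc p K x - i)) * h (x - n)) atTop (𝓝 0) := by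
  set H : C(ℤ_[p], K) := ⟨h, hh⟩
  refine squeeze_zero_norm (fun n => ?_)
    (((PadicInt.tendsto_factorial_atTop_zero (p := p)).norm.mul_const ‖H‖).trans_eq (by simp))
  rw [norm_mul, prod_range_pc_sub_natCast, norm_pc]
  exact mul_le_mul (PadicInt.norm_descPochhammer_eval_le n x) (H.norm_coe_le_norm _)
    (norm_nonneg _) (norm_nonneg _)

end

/-- For any continuous `g : ℤ_[p] → K`, the unique continuous `f`
with `S f = g` is given by `f(x) = Σ_{n=0}^∞ (x)ₙ g(x - n)`, where
`(x)ₙ = x(x-1)⋯(x-n+1)` is the falling factorial. -/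
theorem stmt_8 (p : ℕ) [Fact p.Prime] (K : Type*) [NontriviallyNormedField K]
    [NormedAlgebra ℚ_[p] K] [CompleteSpace K]
    (g : ℤ_[p] → K) (hg : Continuous g)
    (f : ℤ_[p] → K) (hf : Continuous f) (hSf : Sop p K f = g) :
    ∀ x : ℤ_[p], f x = ∑' n : ℕ,
      (∏ i ∈ Finset.range n, (pc p K x - (i : K))) * g (x - (n : ℤ_[p])) := by
  intro x
  -- `K` is ultrametric because its norm extends that of `ℚ_[p]`.
  have : IsUltrametricDist K := IsUltrametricDist.of_normedAlgebra ℚ_[p]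
  have hsum := NonarchimedeanAddGroup.summable_of_tendsto_cofinite_zero
    (Nat.cofinite_eq_atTop ▸ tendsto_prod_range_pc_sub_mul hg x)
  refine tendsto_nhds_unique ?_ hsum.hasSum.tendsto_sum_nat
  subst hSf
  simp_rw [sum_range_prod_mul_Sop]
  simpa using tendsto_const_nhds.sub (tendsto_prod_range_pc_sub_mul hf x)
end

section
/- For r with |r − 1| < 1 and f_r = S⁻¹(x ↦ r^x), the exponential generating function of (f_r(n))_{n≥0} equals exp(rt)/(1 − t) as formal power series. -/
open Filter Finset

/-! On the natural numbers the Mahler series `∑ (r - 1)ᵏ C(x, k)` is the finite binomial sum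
`(r - 1 + 1)ⁿ = rⁿ`, so `S f = rˣ` becomes the recurrence `f (n + 1) = (n + 1) f n + rⁿ⁺¹`,
`f 0 = 1`. Dividing by `n!`, this says exactly that `(1 - t)` times the exponential generating
function of `f` is that of `rⁿ`. -/

theorem PowerSeries.mk_div_factorial_eq_mul_inv_one_sub_X {K : Type*} [Field K] [CharZero K]
    (g a : ℕ → K) (h0 : g 0 = a 0) (hsucc : ∀ n : ℕ, g (n + 1) - (n + 1) * g n = a (n + 1)) :
    mk (fun n => g n / n.factorial) = mk (fun n => a n / n.factorial) * (1 - X)⁻¹ := by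
  rw [eq_mul_inv_iff_mul_eq (by simp)]
  ext n
  rw [mul_sub, mul_one, map_sub, coeff_mk]
  cases n with
  | zero => simp [h0]
  | succ n =>
    rw [coeff_succ_mul_X, coeff_mk, coeff_mk, ← hsucc n, Nat.factorial_succ, Nat.cast_mul]
    have : (n.factorial : K) ≠ 0 := Nat.cast_ne_zero.2 n.factorial_ne_zero
    field_simp
    push_cast
    ring

theorem charZero_of_algebra_padic (p : ℕ) [Fact p.Prime] (K : Type*) [DivisionRing K]
    [Algebra ℚ_[p] K] : CharZero K :=
  charZero_of_injective_algebraMap (algebraMap ℚ_[p] K).injective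

section Mahler

variable (p : ℕ) [Fact p.Prime] (K : Type*) [NontriviallyNormedField K] [NormedAlgebra ℚ_[p] K]

@[simp]
theorem pc_natCast (n : ℕ) : pc p K n = n := by
  simp [pc]

theorem bK_natCast (k n : ℕ) : bK p K k n = n.choose k := by
  have := charZero_of_algebra_padic p K
  rw [bK, pc_natCast, Nat.cast_choose_eq_descPochhammer_div, descPochhammer_eval_eq_prod_range]

theorem tsum_pow_mul_bK_natCast (c : K) (n : ℕ) :
    ∑' k : ℕ, c ^ k * bK p K k n = (c + 1) ^ n := by
  simp only [bK_natCast]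
  rw [tsum_eq_sum (s := range (n + 1)) fun k hk => by
      rw [Nat.choose_eq_zero_of_lt (by simpa [Nat.lt_succ_iff] using hk), Nat.cast_zero, mul_zero],
    add_pow]
  simp

theorem Sop_zero (f : ℤ_[p] → K) : Sop p K f 0 = f 0 := by
  simp [Sop, pc]

theorem Sop_natCast_succ (f : ℤ_[p] → K) (n : ℕ) :
    Sop p K f (n + 1 : ℕ) = f (n + 1 : ℕ) - (n + 1) * f n := by
  rw [Sop, pc_natCast]
  push_cast
  rw [add_sub_cancel_right]

end Mahler

theorem stmt_14_general (p : ℕ) [Fact p.Prime] (K : Type*) [NontriviallyNormedField K]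
    [NormedAlgebra ℚ_[p] K]
    (r : K)
    (f : ℤ_[p] → K)
    (hSf : Sop p K f = fun x : ℤ_[p] => ∑' n : ℕ, (r - 1) ^ n * bK p K n x) :
    PowerSeries.mk (fun n : ℕ => f (n : ℤ_[p]) / (n.factorial : K))
      = PowerSeries.mk (fun n : ℕ => r ^ n / (n.factorial : K))
          * (1 - PowerSeries.X : PowerSeries K)⁻¹ := by
  have := charZero_of_algebra_padic p K
  have hS (n : ℕ) : Sop p K f n = r ^ n := by
    simp only [hSf, tsum_pow_mul_bK_natCast, sub_add_cancel]
  refine PowerSeries.mk_div_factorial_eq_mul_inv_one_sub_X _ _ ?_ fun n => ?_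
  · simpa [Sop_zero] using hS 0
  · rw [← Sop_natCast_succ, hS]

/-- For `r` with `‖r - 1‖ < 1` and `f_r = S⁻¹(x ↦ rˣ)`, the
exponential generating function of `(f_r(n))ₙ` equals `exp(rt)/(1 - t)` as a
formal power series. -/
theorem stmt_14 (p : ℕ) [Fact p.Prime] (K : Type*) [NontriviallyNormedField K]
    [NormedAlgebra ℚ_[p] K] [CompleteSpace K]
    (r : K) (hr : ‖r - 1‖ < 1)
    (f : ℤ_[p] → K) (hf : Continuous f)
    (hSf : Sop p K f = fun x : ℤ_[p] => ∑' n : ℕ, (r - 1) ^ n * bK p K n x) :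
    PowerSeries.mk (fun n : ℕ => f (n : ℤ_[p]) / (n.factorial : K))
      = PowerSeries.mk (fun n : ℕ => r ^ n / (n.factorial : K))
          * (1 - PowerSeries.X : PowerSeries K)⁻¹ :=
  stmt_14_general p K r f hSf
end
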